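/- arXiv:1010.3367 — 7 statements merged into one kernel-verified Lean document; each statement's English description precedes it below -/
import Mathlib

section
/- Let G be a finite simple graph that admits an orientation of its edges in which every vertex has indegree at most d, and suppose the maximum degree satisfies Δ(G) ≥ 2d. Then the spectral radius of G satisfies ρ(G) ≤ 2·√(d·(Δ(G) − d)). -/
/-!
Write the adjacency matrix as `B + Bᵀ`, where `B` is the 0/1 matrix of the orientation: the column
sums of `B` are the indegrees (at most `d`), and row plus column sums are the degrees (at most `Δ`).
For an eigenvector `x` of `μ`, `μ ‖x‖² = 2 xᵀBx`, and Cauchy–Schwarz weighted by the entries of `B`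
gives `(xᵀBx)² ≤ (∑ outdeg(u) x_u²)(∑ indeg(v) x_v²) ≤ (Δ‖x‖² - s) s` with `s = ∑ indeg(v) x_v²`.
As `s ≤ d‖x‖² ≤ Δ‖x‖²/2`, the last product is at most `d (Δ - d) ‖x‖⁴`.
-/

noncomputable def specRad {V : Type*} [Fintype V] [DecidableEq V] (G : SimpleGraph V) : ℝ := by
  classical exact sSup (spectrum ℝ (G.adjMatrix ℝ))

noncomputable def maxDeg {V : Type*} [Fintype V] (G : SimpleGraph V) : ℕ := by
  classical exact G.maxDegree

noncomputable def deg {V : Type*} [Fintype V] (G : SimpleGraph V) (v : V) : ℕ := by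
  classical exact G.degree v

open Finset Matrix

namespace Matrix

variable {ι : Type*} [Fintype ι]

theorem sSup_spectrum_le_of_dotProduct_mulVec_le [DecidableEq ι] {A : Matrix ι ι ℝ} {c : ℝ}
    (hc : 0 ≤ c) (hA : ∀ x, x ⬝ᵥ A *ᵥ x ≤ c * (x ⬝ᵥ x)) : sSup (spectrum ℝ A) ≤ c := by
  refine Real.sSup_le (fun μ hμ => ?_) hc
  rw [← spectrum_toLin'] at hμ
  obtain ⟨x, hx⟩ := (Module.End.HasEigenvalue.of_mem_spectrum hμ).exists_hasEigenvector
  have hxx : 0 < x ⬝ᵥ x :=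
    (Fintype.sum_nonneg fun i => mul_self_nonneg (x i)).lt_of_ne'
      (dotProduct_self_eq_zero.not.mpr hx.2)
  have h := hA x
  rw [← toLin'_apply, hx.apply_eq_smul, dotProduct_smul, smul_eq_mul] at h
  exact le_of_mul_le_mul_right h hxx

theorem sq_dotProduct_mulVec_le {B : Matrix ι ι ℝ} (hB : ∀ i j, 0 ≤ B i j) (x : ι → ℝ) :
    (x ⬝ᵥ B *ᵥ x) ^ 2 ≤
      (∑ i, (∑ j, B i j) * x i ^ 2) * ∑ j, (∑ i, B i j) * x j ^ 2 := by
  have key := sum_sq_le_sum_mul_sum_of_sq_le_mul (univ : Finset (ι × ι))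
    (r := fun p => x p.1 * B p.1 p.2 * x p.2) (f := fun p => B p.1 p.2 * x p.1 ^ 2)
    (g := fun p => B p.1 p.2 * x p.2 ^ 2)
    (fun p _ => mul_nonneg (hB _ _) (sq_nonneg _)) (fun p _ => mul_nonneg (hB _ _) (sq_nonneg _))
    (fun p _ => le_of_eq (by ring))
  simp only [Fintype.sum_prod_type] at key
  calc (x ⬝ᵥ B *ᵥ x) ^ 2 = (∑ i, ∑ j, x i * B i j * x j) ^ 2 := by
        simp only [dotProduct, mulVec, mul_sum, mul_assoc]
    _ ≤ _ := key
    _ = _ := by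
        congr 1
        · simp only [sum_mul]
        · rw [sum_comm]; simp only [sum_mul]

theorem dotProduct_add_transpose_mulVec_le {B : Matrix ι ι ℝ} (hB : ∀ i j, 0 ≤ B i j) {d Δ : ℝ}
    (hcol : ∀ j, ∑ i, B i j ≤ d) (hdeg : ∀ i, ∑ j, B i j + ∑ j, B j i ≤ Δ) (hdΔ : 2 * d ≤ Δ)
    (x : ι → ℝ) : x ⬝ᵥ (B + Bᵀ) *ᵥ x ≤ 2 * √(d * (Δ - d)) * (x ⬝ᵥ x) := by
  set S := x ⬝ᵥ x
  set r := ∑ i, (∑ j, B i j) * x i ^ 2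
  set s := ∑ j, (∑ i, B i j) * x j ^ 2
  have hS : 0 ≤ S := Fintype.sum_nonneg fun i => mul_self_nonneg (x i)
  have hs0 : 0 ≤ s :=
    sum_nonneg fun j _ => mul_nonneg (sum_nonneg fun i _ => hB i j) (sq_nonneg _)
  have hs : s ≤ d * S := by
    simp only [s, S, dotProduct, mul_sum, ← sq]
    exact sum_le_sum fun j _ => mul_le_mul_of_nonneg_right (hcol j) (sq_nonneg _)
  have hsum : r + s ≤ Δ * S := by
    simp only [r, s, S, dotProduct, mul_sum, ← sq, ← sum_add_distrib, ← add_mul]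
    exact sum_le_sum fun i _ =>
      mul_le_mul_of_nonneg_right (by simpa only [sum_add_distrib] using hdeg i) (sq_nonneg _)
  have hCS : (x ⬝ᵥ B *ᵥ x) ^ 2 ≤ r * s := sq_dotProduct_mulVec_le hB x
  -- `(Δ S - s) s` increases in `s` up to `Δ S / 2 ≥ d S`.
  have hsq : (x ⬝ᵥ B *ᵥ x) ^ 2 ≤ d * (Δ - d) * S ^ 2 := by
    have hΔS : 0 ≤ (Δ - 2 * d) * S := mul_nonneg (by linarith) hS
    nlinarith [mul_le_mul_of_nonneg_right hsum hs0,
      mul_nonneg (sub_nonneg.2 hs) (by linarith : 0 ≤ Δ * S - d * S - s)]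
  calc x ⬝ᵥ (B + Bᵀ) *ᵥ x = 2 * (x ⬝ᵥ B *ᵥ x) := by
        rw [add_mulVec, dotProduct_add, dotProduct_mulVec x Bᵀ, vecMul_transpose, dotProduct_comm]
        ring
    _ ≤ 2 * √(d * (Δ - d) * S ^ 2) := by
        gcongr
        exact (le_abs_self _).trans (Real.abs_le_sqrt hsq)
    _ = 2 * √(d * (Δ - d)) * S := by
        rw [Real.sqrt_mul' _ (sq_nonneg S), Real.sqrt_sq hS, mul_assoc]

end Matrix

namespace SimpleGraph

variable {V : Type*} [DecidableEq V] (G : SimpleGraph V) [DecidableRel G.Adj] (R : Type*)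
  (f : Sym2 V → V)

/-- The orientation sends each edge `e` towards its head `f e`. -/
def orientationMatrix [Zero R] [One R] : Matrix V V R :=
  Matrix.of fun u v => if G.Adj u v ∧ f s(u, v) = v then 1 else 0

variable {G R f}

theorem orientationMatrix_nonneg [Zero R] [One R] [PartialOrder R] [ZeroLEOneClass R] (u v : V) :
    0 ≤ G.orientationMatrix R f u v :=
  ite_nonneg zero_le_one le_rfl

theorem adjMatrix_eq_orientationMatrix_add_transpose [AddZeroClass R] [One R]
    (hf : ∀ e ∈ G.edgeSet, f e ∈ e) :
    G.adjMatrix R = G.orientationMatrix R f + (G.orientationMatrix R f)ᵀ := by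
  ext u v
  simp only [orientationMatrix, adjMatrix_apply, Matrix.add_apply, transpose_apply, of_apply,
    G.adj_comm v u, Sym2.eq_swap (a := v)]
  by_cases h : G.Adj u v
  · rcases Sym2.mem_iff.1 (hf _ h) with hu | hv
    · simp [h, hu, h.ne]
    · simp [h, hv, h.ne.symm]
  · simp [h]

variable [Fintype V] [AddCommMonoidWithOne R]

theorem sum_orientationMatrix_apply_eq_ncard (hf : ∀ e ∈ G.edgeSet, f e ∈ e) (v : V) :
    ∑ u, G.orientationMatrix R f u v = ({e | e ∈ G.edgeSet ∧ f e = v} : Set (Sym2 V)).ncard := by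
  have himage : {e | e ∈ G.edgeSet ∧ f e = v} =
      (fun u => s(u, v)) '' ↑(univ.filter fun u => G.Adj u v ∧ f s(u, v) = v) := by
    ext e
    simp only [Set.mem_ofPred_eq, coe_filter, mem_univ, true_and, Set.mem_image]
    constructor
    · rintro ⟨he, hfe⟩
      obtain ⟨u, rfl⟩ := Sym2.mem_iff_exists.1 (hfe ▸ hf e he)
      exact ⟨u, ⟨G.adj_symm he, by rwa [Sym2.eq_swap]⟩, Sym2.eq_swap⟩
    · rintro ⟨u, ⟨hadj, hfu⟩, rfl⟩
      exact ⟨hadj, hfu⟩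
  rw [himage, Set.ncard_image_of_injective _ fun _ _ => Sym2.congr_left.mp, Set.ncard_coe_finset]
  simp [orientationMatrix, sum_boole]

theorem sum_orientationMatrix_apply_add_sum_eq_degree (hf : ∀ e ∈ G.edgeSet, f e ∈ e) (u : V) :
    ∑ v, G.orientationMatrix R f u v + ∑ v, G.orientationMatrix R f v u = G.degree u :=
  calc ∑ v, G.orientationMatrix R f u v + ∑ v, G.orientationMatrix R f v u
      = ∑ v, G.adjMatrix R u v := by
        rw [adjMatrix_eq_orientationMatrix_add_transpose hf, ← sum_add_distrib]; rfl
    _ = G.degree u := by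
        simp [adjMatrix_apply, ← card_neighborFinset_eq_degree, neighborFinset_eq_filter]

end SimpleGraph

/-- A finite simple graph admitting an orientation with all indegrees at most d,
whose maximum degree is at least 2d, has spectral radius at most 2√(d(Δ−d)). -/
theorem stmt0 {V : Type*} [Fintype V] [DecidableEq V] (d : ℕ) (G : SimpleGraph V)
    (f : Sym2 V → V) (hf : ∀ e ∈ G.edgeSet, f e ∈ e)
    (hind : ∀ v : V, ({e | e ∈ G.edgeSet ∧ f e = v} : Set (Sym2 V)).ncard ≤ d)
    (hΔ : 2 * d ≤ maxDeg G) :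
    specRad G ≤ 2 * Real.sqrt (d * ((maxDeg G : ℝ) - d)) := by
  classical
  set B := G.orientationMatrix ℝ f
  have hcol (v : V) : ∑ u, B u v ≤ d := by
    rw [SimpleGraph.sum_orientationMatrix_apply_eq_ncard hf]
    exact_mod_cast hind v
  have hdeg (u : V) : ∑ v, B u v + ∑ v, B v u ≤ maxDeg G := by
    rw [SimpleGraph.sum_orientationMatrix_apply_add_sum_eq_degree hf]
    exact_mod_cast G.degree_le_maxDegree u
  unfold specRad
  refine Matrix.sSup_spectrum_le_of_dotProduct_mulVec_le (by positivity) fun x => ?_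
  rw [SimpleGraph.adjMatrix_eq_orientationMatrix_add_transpose hf]
  exact Matrix.dotProduct_add_transpose_mulVec_le SimpleGraph.orientationMatrix_nonneg hcol hdeg
    (by exact_mod_cast hΔ) x
end

section
/- Every d-degenerate finite simple graph G is spectrally 4d-degenerate; that is, every subgraph H of G satisfies ρ(H) ≤ √(4d·Δ(H)). -/
/-- G is spectrally d-degenerate: every subgraph H of G has ρ(H) ≤ √(d·Δ(H)). -/
def SpecDegen {V : Type*} [Fintype V] [DecidableEq V] (d : ℝ) (G : SimpleGraph V) : Prop :=
  ∀ H : SimpleGraph V, H ≤ G → specRad H ≤ Real.sqrt (d * maxDeg H)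

/-- A graph is d-degenerate: every subgraph has a vertex of degree at most d. -/
def Degen {V : Type*} (d : ℕ) (G : SimpleGraph V) : Prop :=
  ∀ s : Finset V, s.Nonempty → ∃ v ∈ s, ({u | u ∈ s ∧ G.Adj v u} : Set V).ncard ≤ d


/-! Take a degeneracy ordering, in which every vertex has at most `d` neighbours of lower rank,
and orient each edge of a subgraph `H` upwards: out-degrees are at most `Δ(H)`, in-degrees at
most `d`. For an eigenvector `x` of `H`, the quadratic form `xᵀ A_H x` is twice the sum of
`x_u x_w` over oriented edges `u → w`, and Cauchy–Schwarz bounds that sum by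
`√(Δ(H) ‖x‖²) √(d ‖x‖²)`. Hence `ρ(H) ≤ 2 √(d Δ(H))`. -/

open Finset Matrix

section RelationSums

variable {ι : Type*} [Fintype ι] (R : ι → ι → Prop) [DecidableRel R]

lemma sum_sum_ite_le_mul_sum {a : ℕ} (hR : ∀ u, #{w | R u w} ≤ a) {g : ι → ℝ}
    (hg : ∀ u, 0 ≤ g u) :
    ∑ u, ∑ w, (if R u w then g u else 0) ≤ a * ∑ u, g u := by
  rw [mul_sum]
  gcongr with u
  rw [← sum_filter, sum_const, nsmul_eq_mul]
  exact mul_le_mul_of_nonneg_right (by exact_mod_cast hR u) (hg u)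

lemma sum_sum_ite_mul_le_sqrt_mul_sum_sq {a b : ℕ} (hout : ∀ u, #{w | R u w} ≤ a)
    (hin : ∀ w, #{u | R u w} ≤ b) (y : ι → ℝ) :
    ∑ u, ∑ w, (if R u w then y u * y w else 0) ≤ √(a * b) * ∑ u, y u ^ 2 := by
  set S := ∑ u, y u ^ 2
  let F : ι × ι → ℝ := fun p => if R p.1 p.2 then y p.1 else 0
  let G : ι × ι → ℝ := fun p => if R p.1 p.2 then y p.2 else 0
  have hFG : ∑ u, ∑ w, (if R u w then y u * y w else 0) = ∑ p, F p * G p := by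
    rw [Fintype.sum_prod_type]
    refine sum_congr rfl fun u _ => sum_congr rfl fun w _ => ?_
    by_cases h : R u w <;> simp [F, G, h]
  have hF : ∑ p, F p ^ 2 ≤ a * S := by
    rw [Fintype.sum_prod_type]
    refine le_of_eq_of_le (sum_congr rfl fun u _ => sum_congr rfl fun w _ => ?_)
      (sum_sum_ite_le_mul_sum R hout fun u => sq_nonneg (y u))
    by_cases h : R u w <;> simp [F, h]
  have hG : ∑ p, G p ^ 2 ≤ b * S := by
    rw [Fintype.sum_prod_type_right]
    refine le_of_eq_of_le (sum_congr rfl fun w _ => sum_congr rfl fun u _ => ?_)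
      (sum_sum_ite_le_mul_sum (Function.swap R) hin fun w => sq_nonneg (y w))
    by_cases h : R u w <;> simp [G, h]
  calc ∑ u, ∑ w, (if R u w then y u * y w else 0)
      ≤ √(∑ p, F p ^ 2) * √(∑ p, G p ^ 2) := hFG ▸ Real.sum_mul_le_sqrt_mul_sqrt _ F G
    _ ≤ √(a * S) * √(b * S) := by gcongr
    _ = √(a * b) * S := by
      rw [← Real.sqrt_mul (by positivity), mul_mul_mul_comm, Real.sqrt_mul (by positivity),
        Real.sqrt_mul_self (by positivity)]

end RelationSums

lemma Matrix.le_of_mem_spectrum_of_dotProduct_mulVec_le {n : Type*} [Fintype n] [DecidableEq n]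
    {A : Matrix n n ℝ} {c μ : ℝ} (hA : ∀ y, y ⬝ᵥ A *ᵥ y ≤ c * (y ⬝ᵥ y))
    (hμ : μ ∈ spectrum ℝ A) : μ ≤ c := by
  rw [← spectrum_toLin', ← Module.End.hasEigenvalue_iff_mem_spectrum] at hμ
  obtain ⟨x, hx⟩ := hμ.exists_hasEigenvector
  have hAx : A *ᵥ x = μ • x := by simpa using hx.apply_eq_smul
  have hxx : 0 < x ⬝ᵥ x :=
    lt_of_le_of_ne (dotProduct_self_star_nonneg x) (Ne.symm (dotProduct_self_eq_zero.not.mpr hx.2))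
  have := hA x
  rw [hAx, dotProduct_smul, smul_eq_mul] at this
  exact le_of_mul_le_mul_right this hxx

namespace SimpleGraph

variable {V : Type*} [Fintype V] (H : SimpleGraph V) [DecidableRel H.Adj]

lemma sum_sum_ite_adj_eq_two_mul {β : Type*} [LinearOrder β] {f : V → β}
    (hf : Function.Injective f) (y : V → ℝ) :
    ∑ u, ∑ w, (if H.Adj u w then y u * y w else 0)
      = 2 * ∑ u, ∑ w, (if H.Adj u w ∧ f u < f w then y u * y w else 0) := by
  have hsplit : ∀ u w, (if H.Adj u w then y u * y w else 0)
      = (if H.Adj u w ∧ f u < f w then y u * y w else 0)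
        + (if H.Adj w u ∧ f w < f u then y w * y u else 0) := by
    intro u w
    by_cases h : H.Adj u w
    · rcases (hf.ne h.ne).lt_or_gt with hlt | hgt
      · simp [h, hlt, hlt.not_gt]
      · simp [h, h.symm, hgt, hgt.not_gt, mul_comm]
    · simp [h, H.adj_comm w u]
  simp_rw [hsplit, sum_add_distrib]
  rw [sum_comm (f := fun u w => if H.Adj w u ∧ f w < f u then y w * y u else 0)]
  ring

lemma dotProduct_adjMatrix_mulVec_le {β : Type*} [LinearOrder β] {f : V → β}
    (hf : Function.Injective f) {d : ℕ} (hback : ∀ v, #{u | H.Adj v u ∧ f u < f v} ≤ d)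
    (y : V → ℝ) : y ⬝ᵥ H.adjMatrix ℝ *ᵥ y ≤ 2 * √(d * H.maxDegree) * (y ⬝ᵥ y) := by
  have hout : ∀ u, #{w | H.Adj u w ∧ f u < f w} ≤ H.maxDegree := fun u =>
    (card_le_card fun w hw => by simp_all).trans (H.degree_le_maxDegree u)
  have hin : ∀ w, #{u | H.Adj u w ∧ f u < f w} ≤ d := fun w =>
    (card_le_card fun u hu => by simp_all [H.adj_comm]).trans (hback w)
  rw [dotProduct_mulVec_adjMatrix, H.sum_sum_ite_adj_eq_two_mul hf, mul_assoc, mul_comm (d : ℝ)]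
  gcongr
  simpa [dotProduct, sq] using sum_sum_ite_mul_le_sqrt_mul_sum_sq _ hout hin y

end SimpleGraph

lemma Degen.exists_injOn_rank {V : Type*} [DecidableEq V] {d : ℕ} {G : SimpleGraph V}
    [DecidableRel G.Adj] (hG : Degen d G) (s : Finset V) :
    ∃ f : V → ℕ, Set.InjOn f s ∧ ∀ v ∈ s, #{u ∈ s | G.Adj v u ∧ f u < f v} ≤ d := by
  induction s using Finset.strongInduction with
  | _ s ih =>
  rcases s.eq_empty_or_nonempty with rfl | hs
  · exact ⟨fun _ => 0, by simp, by simp⟩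
  obtain ⟨v, hv, hvd⟩ := hG s hs
  rw [← coe_filter, Set.ncard_coe_finset] at hvd
  obtain ⟨f, hinj, hdeg⟩ := ih (s.erase v) (erase_ssubset hv)
  -- `v` has at most `d` neighbours in `s`; ranking it above all of `s.erase v` leaves the
  -- back-degrees there unchanged.
  have hlt : ∀ u ∈ s, u ≠ v → f u < s.sup f + 1 := fun u hu _ =>
    Nat.lt_succ_of_le (le_sup hu)
  refine ⟨Function.update f v (s.sup f + 1), ?_, fun u hu => ?_⟩
  · intro a ha b hb hab
    by_cases hav : a = v <;> by_cases hbv : b = v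
    · rw [hav, hbv]
    · rw [hav, Function.update_self, Function.update_of_ne hbv] at hab
      exact absurd hab.symm (hlt b hb hbv).ne
    · rw [hbv, Function.update_self, Function.update_of_ne hav] at hab
      exact absurd hab (hlt a ha hav).ne
    · rw [Function.update_of_ne hav, Function.update_of_ne hbv] at hab
      exact hinj (mem_erase.mpr ⟨hav, ha⟩) (mem_erase.mpr ⟨hbv, hb⟩) hab
  by_cases huv : u = v
  · subst huv
    exact (card_le_card (monotone_filter_right _ fun _ _ hw => hw.1)).trans hvd
  refine (card_le_card fun w hw => ?_).trans (hdeg u (mem_erase.mpr ⟨huv, hu⟩))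
  simp only [mem_filter, Function.update_of_ne huv] at hw
  have hwv : w ≠ v := by
    rintro rfl
    rw [Function.update_self] at hw
    exact (hlt u hu huv).not_gt hw.2.2
  simp only [mem_filter, mem_erase, Function.update_of_ne hwv] at hw ⊢
  exact ⟨⟨hwv, hw.1⟩, hw.2⟩

lemma Degen.exists_injective_rank {V : Type*} [Fintype V] [DecidableEq V] {d : ℕ}
    {G : SimpleGraph V} [DecidableRel G.Adj] (hG : Degen d G) :
    ∃ f : V → ℕ, Function.Injective f ∧ ∀ v, #{u | G.Adj v u ∧ f u < f v} ≤ d := by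
  obtain ⟨f, hinj, hdeg⟩ := hG.exists_injOn_rank univ
  exact ⟨f, fun a b => hinj (mem_univ a) (mem_univ b), fun v => by simpa using hdeg v (mem_univ v)⟩

/-- Every d-degenerate finite simple graph is spectrally 4d-degenerate. -/
theorem stmt1 {V : Type*} [Fintype V] [DecidableEq V] (d : ℕ) (G : SimpleGraph V)
    (hG : Degen d G) :
    SpecDegen (4 * (d : ℝ)) G := by
  classical
  intro H hHG
  obtain ⟨f, hf, hback⟩ := hG.exists_injective_rank
  have hbackH : ∀ v, #{u | H.Adj v u ∧ f u < f v} ≤ d := fun v =>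
    (card_le_card (monotone_filter_right _ fun _ _ hu => ⟨hHG hu.1, hu.2⟩)).trans (hback v)
  have hsqrt : √(4 * d * H.maxDegree) = 2 * √(d * H.maxDegree) := by
    rw [mul_assoc, Real.sqrt_mul (by norm_num), show (4 : ℝ) = 2 ^ 2 by norm_num,
      Real.sqrt_sq (by norm_num)]
  refine Real.sSup_le (fun μ hμ => ?_) (Real.sqrt_nonneg _)
  rw [maxDeg, hsqrt]
  exact le_of_mem_spectrum_of_dotProduct_mulVec_le (H.dotProduct_adjMatrix_mulVec_le hf hbackH) hμ
end

section
/- Let G be a finite simple graph with a partition V(G) = V₁ ∪ ⋯ ∪ V_k into nonempty parts with |V_i| = n_i, let e_{ij} denote the number of ordered pairs (u, v) with u ∈ V_i, v ∈ V_j and uv an edge of G, and set b_{ij} = e_{ij}/n_i. If B' = [b'_{ij}] is any real k×k matrix with 0 ≤ b'_{ij} ≤ b_{ij} for all i, j, then ρ(G) ≥ ρ(B'), where ρ(B') is the maximum modulus of an eigenvalue of B'. -/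
noncomputable def matSpecRad {n : Type*} [Fintype n] [DecidableEq n] (M : Matrix n n ℝ) : ℝ :=
  sSup {r : ℝ | ∃ z ∈ spectrum ℂ (M.map (fun x : ℝ => (x : ℂ))), ‖z‖ = r}

open Finset Matrix

namespace Matrix

variable {n ι : Type*} [Fintype n]

theorem IsHermitian.dotProduct_mulVec_le [DecidableEq n] {A : Matrix n n ℝ} (hA : A.IsHermitian)
    {c : ℝ} (hc : ∀ μ ∈ spectrum ℝ A, μ ≤ c) (w : n → ℝ) :
    w ⬝ᵥ (A *ᵥ w) ≤ c * (w ⬝ᵥ w) := by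
  have hpsd : (algebraMap ℝ (Matrix n n ℝ) c - A).PosSemidef := by
    refine posSemidef_iff_isHermitian_and_spectrum_nonneg.2 ⟨(isHermitian_diagonal _).sub hA, ?_⟩
    rw [← spectrum.singleton_sub_eq]
    rintro _ ⟨_, rfl, μ, hμ, rfl⟩
    exact sub_nonneg.2 (hc μ hμ)
  have := hpsd.dotProduct_mulVec_nonneg w
  rw [star_trivial, sub_mulVec, dotProduct_sub, Algebra.algebraMap_eq_smul_one, smul_mulVec,
    one_mulVec, dotProduct_smul, smul_eq_mul] at this
  linarith

theorem exists_mulVec_eq_smul_of_mem_spectrum [DecidableEq n] {K : Type*} [Field K]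
    {M : Matrix n n K} {μ : K} (h : μ ∈ spectrum K M) : ∃ v ≠ 0, M *ᵥ v = μ • v := by
  rw [← spectrum_toLin', ← Module.End.hasEigenvalue_iff_mem_spectrum] at h
  obtain ⟨v, hv⟩ := h.exists_hasEigenvector
  exact ⟨v, hv.2, by simpa using hv.apply_eq_smul⟩

theorem norm_smul_le_mulVec_norm {B : Matrix n n ℝ} (hB : ∀ i j, 0 ≤ B i j) {x : n → ℂ} {z : ℂ}
    (hx : B.map (↑) *ᵥ x = z • x) (i : n) :
    ‖z‖ * ‖x i‖ ≤ (B *ᵥ fun j => ‖x j‖) i :=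
  calc ‖z‖ * ‖x i‖ = ‖∑ j, (B i j : ℂ) * x j‖ := by
        rw [← norm_mul, ← smul_eq_mul, ← Pi.smul_apply, ← hx]; rfl
    _ ≤ ∑ j, ‖(B i j : ℂ) * x j‖ := norm_sum_le _ _
    _ = (B *ᵥ fun j => ‖x j‖) i := by
        simp [mulVec, dotProduct, Complex.norm_real, abs_of_nonneg (hB i _)]

variable {R : Type*} [CommSemiring R] [DecidableEq ι]

def blockSum (A : Matrix n n R) (P : n → ι) : Matrix ι ι R :=
  of fun i j => ∑ u with P u = i, ∑ v with P v = j, A u v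

theorem dotProduct_mulVec_comp [Fintype ι] (A : Matrix n n R) (P : n → ι) (y : ι → R) :
    (y ∘ P) ⬝ᵥ (A *ᵥ (y ∘ P)) = y ⬝ᵥ (blockSum A P *ᵥ y) := by
  calc (y ∘ P) ⬝ᵥ (A *ᵥ (y ∘ P))
      = ∑ i, ∑ u with P u = i, ∑ j, ∑ v with P v = j, y (P u) * A u v * y (P v) := by
        simp only [dotProduct, mulVec, Function.comp_apply, mul_sum, sum_fiberwise, mul_assoc]
    _ = ∑ i, ∑ u with P u = i, ∑ j, ∑ v with P v = j, y i * A u v * y j := by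
        refine sum_congr rfl fun i _ => sum_congr rfl fun u hu => sum_congr rfl fun j _ =>
          sum_congr rfl fun v hv => ?_
        rw [(mem_filter.1 hu).2, (mem_filter.1 hv).2]
    _ = y ⬝ᵥ (blockSum A P *ᵥ y) := by
        simp only [dotProduct, mulVec, blockSum, of_apply, mul_sum, sum_mul, mul_assoc]
        exact sum_congr rfl fun i _ => sum_comm

theorem blockSum_one [DecidableEq n] (P : n → ι) :
    blockSum (1 : Matrix n n R) P = diagonal fun i => (#{u | P u = i} : R) := by
  ext i j
  simp only [blockSum, of_apply, one_apply, sum_ite_eq, mem_filter, mem_univ, true_and, sum_boole,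
    filter_filter, diagonal_apply]
  split_ifs with hij
  · simp_rw [hij, and_self]
  · rw [filter_false_of_mem fun u _ h => hij (h.1.symm.trans h.2), card_empty, Nat.cast_zero]

theorem mul_dotProduct_diagonal_mulVec_le [Fintype ι] {d y : ι → ℝ} {B Q : Matrix ι ι ℝ} {r : ℝ}
    (hd : 0 ≤ d) (hy : 0 ≤ y) (hdBQ : ∀ i j, d i * B i j ≤ Q i j)
    (hr : ∀ i, r * y i ≤ (B *ᵥ y) i) :
    r * (y ⬝ᵥ (diagonal d *ᵥ y)) ≤ y ⬝ᵥ (Q *ᵥ y) :=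
  calc r * (y ⬝ᵥ (diagonal d *ᵥ y)) = ∑ i, y i * d i * (r * y i) := by
        simp only [dotProduct, mulVec_diagonal, mul_sum]; ring_nf
    _ ≤ ∑ i, y i * d i * (B *ᵥ y) i := by
        gcongr with i; exact mul_nonneg (hy i) (hd i); exact hr i
    _ = ∑ i, y i * ∑ j, d i * B i j * y j := by
        simp only [mulVec, dotProduct, mul_sum]; ring_nf
    _ ≤ y ⬝ᵥ (Q *ᵥ y) := by
        simp only [dotProduct, mulVec]
        gcongr with i _ j; exacts [hy i, hy j, hdBQ i j]

end Matrix

theorem matSpecRad_le {n : Type*} [Fintype n] [DecidableEq n] {M : Matrix n n ℝ} {c : ℝ}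
    (hc : 0 ≤ c) (h : ∀ z ∈ spectrum ℂ (M.map (fun x : ℝ => (x : ℂ))), ‖z‖ ≤ c) : matSpecRad M ≤ c :=
  Real.sSup_le (by rintro _ ⟨z, hz, rfl⟩; exact h z hz) hc

namespace SimpleGraph

variable {V : Type*} [Fintype V] (G : SimpleGraph V)

theorem blockSum_adjMatrix [DecidableRel G.Adj] {ι : Type*} [DecidableEq ι] (P : V → ι) (i j : ι) :
    Matrix.blockSum (G.adjMatrix ℝ) P i j =
      Nat.card {p : V × V | P p.1 = i ∧ P p.2 = j ∧ G.Adj p.1 p.2} := by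
  rw [Nat.card_eq_card_toFinset, Set.toFinset_ofPred, natCast_card_filter, Fintype.sum_prod_type]
  simp only [blockSum, of_apply, adjMatrix_apply, sum_filter, ite_and, ite_sum_zero]

variable [DecidableEq V]

theorem specRad_eq [DecidableRel G.Adj] : specRad G = sSup (spectrum ℝ (G.adjMatrix ℝ)) := by
  unfold specRad; congr

theorem dotProduct_adjMatrix_mulVec_le_s8 [DecidableRel G.Adj] (w : V → ℝ) :
    w ⬝ᵥ (G.adjMatrix ℝ *ᵥ w) ≤ specRad G * (w ⬝ᵥ w) :=
  (G.isHermitian_adjMatrix ℝ).dotProduct_mulVec_le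
    (fun _ hμ => G.specRad_eq ▸ le_csSup (Matrix.finite_real_spectrum).bddAbove hμ) w

theorem specRad_nonneg : 0 ≤ specRad G := by
  classical
  cases isEmpty_or_nonempty V with
  | inl _ => rw [specRad_eq, spectrum.of_subsingleton, Real.sSup_empty]
  | inr h =>
    obtain ⟨v⟩ := h
    -- the Rayleigh quotient at a basis vector is a diagonal entry of the adjacency matrix, i.e. 0
    simpa using G.dotProduct_adjMatrix_mulVec_le_s8 (Pi.single v 1)

end SimpleGraph

/-- If B' is a quotient sub-adjacency matrix for a partition of V(G) into nonempty parts
(the partition is given by a surjective coloring `P`; `b i j = e i j / n i` where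
`e i j` counts ordered adjacent pairs from part i to part j and `n i` is the size of
part i), then ρ(G) ≥ ρ(B'). -/
theorem stmt8 {V : Type*} [Fintype V] [DecidableEq V] (G : SimpleGraph V)
    {k : ℕ} (P : V → Fin k) (hP : Function.Surjective P)
    (B' : Matrix (Fin k) (Fin k) ℝ)
    (hB' : ∀ i j : Fin k, 0 ≤ B' i j ∧
      B' i j ≤ (Nat.card {p : V × V | P p.1 = i ∧ P p.2 = j ∧ G.Adj p.1 p.2} : ℝ) /
        (Nat.card {v : V | P v = i} : ℝ)) :
    matSpecRad B' ≤ specRad G := by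
  classical
  refine matSpecRad_le G.specRad_nonneg fun z hz => ?_
  obtain ⟨x, hx0, hx⟩ := exists_mulVec_eq_smul_of_mem_spectrum hz
  set y : Fin k → ℝ := fun i => ‖x i‖
  have hy : 0 ≤ y := fun i => norm_nonneg _
  have hdB : ∀ i j, (#{v | P v = i} : ℝ) * B' i j ≤ blockSum (G.adjMatrix ℝ) P i j := by
    intro i j
    rw [G.blockSum_adjMatrix, mul_comm]
    refine mul_le_of_le_div₀ (Nat.cast_nonneg _) (Nat.cast_nonneg _) ?_
    simpa [Nat.card_eq_card_toFinset] using (hB' i j).2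
  have hw : 0 < (y ∘ P) ⬝ᵥ (y ∘ P) := by
    refine (dotProduct_nonneg_of_nonneg (fun v => hy (P v)) (fun v => hy (P v))).lt_of_ne' ?_
    obtain ⟨i, hi⟩ := Function.ne_iff.1 hx0
    obtain ⟨v, rfl⟩ := hP i
    exact fun h => hi (norm_eq_zero.1 (congrFun (dotProduct_self_eq_zero.1 h) v))
  have hlower : ‖z‖ * ((y ∘ P) ⬝ᵥ (y ∘ P)) ≤ (y ∘ P) ⬝ᵥ (G.adjMatrix ℝ *ᵥ (y ∘ P)) := by
    have := mul_dotProduct_diagonal_mulVec_le (fun i => Nat.cast_nonneg _) hy hdB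
      (norm_smul_le_mulVec_norm (fun i j => (hB' i j).1) hx)
    rwa [← blockSum_one, ← dotProduct_mulVec_comp, one_mulVec, ← dotProduct_mulVec_comp] at this
  exact le_of_mul_le_mul_right (hlower.trans (G.dotProduct_adjMatrix_mulVec_le_s8 _)) hw
end

section
/- Let G₀ be a finite simple graph with minimum degree r. Then G₀ has a subgraph G with the same vertex set such that: G is obtained from G₀ by deleting only edges both of whose endpoints have degree greater than r at the time of deletion, the minimum degree of G equals r, and the set of vertices of G whose degree in G is greater than r is an independent set in G. -/
noncomputable def minDeg {V : Type*} [Fintype V] (G : SimpleGraph V) : ℕ := by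
  classical exact G.minDegree

/-!
Delete edges joining two vertices of degree greater than `r` for as long as there is one.
Each deletion removes an edge, so the process stops, and when it stops the vertices of
degree greater than `r` are independent by construction. A vertex of minimum degree `r` is
never an endpoint of a deleted edge and every vertex keeps degree at least `r`, so the
minimum degree stays `r` throughout.
-/

theorem Relation.ReflTransGen.exists_seq {α : Type*} {R : α → α → Prop} {a b : α}
    (h : Relation.ReflTransGen R a b) :
    ∃ (m : ℕ) (f : ℕ → α), f 0 = a ∧ f m = b ∧ ∀ i < m, R (f i) (f (i + 1)) := by
  induction h using Relation.ReflTransGen.head_induction_on with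
  | refl => exact ⟨0, fun _ => b, rfl, rfl, by omega⟩
  | head hac _ ih =>
    obtain ⟨m, f, hf0, hfm, hf⟩ := ih
    refine ⟨m + 1, fun | 0 => _ | i + 1 => f i, rfl, hfm, ?_⟩
    rintro (_ | i) hi
    · simpa [hf0] using hac
    · exact hf i (by omega)

open SimpleGraph

section Degrees

variable {V : Type*} [Fintype V] (G : SimpleGraph V)

lemma deg_eq_ncard (v : V) : deg G v = (G.neighborSet v).ncard := by
  classical
  rw [deg, degree, neighborFinset_def, Set.ncard_eq_toFinset_card']

lemma deg_eq_degree [DecidableRel G.Adj] (v : V) : deg G v = G.degree v := by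
  rw [deg_eq_ncard, degree, neighborFinset_def, Set.ncard_eq_toFinset_card']

lemma minDeg_eq_minDegree [DecidableRel G.Adj] : minDeg G = G.minDegree := by
  unfold minDeg
  congr!

lemma minDeg_le_deg (v : V) : minDeg G ≤ deg G v := by
  classical
  rw [minDeg_eq_minDegree, deg_eq_degree]
  exact G.minDegree_le_degree v

lemma exists_deg_eq_minDeg [Nonempty V] : ∃ v, deg G v = minDeg G := by
  classical
  obtain ⟨v, hv⟩ := G.exists_minimal_degree_vertex
  exact ⟨v, by rw [deg_eq_degree, minDeg_eq_minDegree, hv]⟩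

lemma le_minDeg [Nonempty V] {k : ℕ} (h : ∀ v, k ≤ deg G v) : k ≤ minDeg G := by
  classical
  rw [minDeg_eq_minDegree]
  exact G.le_minDegree_of_forall_le_degree k fun v => deg_eq_degree G v ▸ h v

variable {G} {x y : V}

lemma deg_deleteEdges_of_ne {v : V} (hvx : v ≠ x) (hvy : v ≠ y) :
    deg (G.deleteEdges {s(x, y)}) v = deg G v := by
  rw [deg_eq_ncard, deg_eq_ncard]
  congr 1
  ext w
  simp only [mem_neighborSet, deleteEdges_adj, Set.mem_singleton_iff, Sym2.eq_iff,
    and_iff_left_iff_imp]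
  rintro - (⟨rfl, -⟩ | ⟨rfl, -⟩) <;> contradiction

lemma deg_deleteEdges_left (h : G.Adj x y) :
    deg (G.deleteEdges {s(x, y)}) x = deg G x - 1 := by
  have hnbr : (G.deleteEdges {s(x, y)}).neighborSet x = G.neighborSet x \ {y} := by
    ext w
    simp only [mem_neighborSet, deleteEdges_adj, Set.mem_singleton_iff, Sym2.eq_iff,
      Set.mem_sdiff, true_and]
    constructor
    · rintro ⟨hw, hne⟩
      exact ⟨hw, fun hwy => hne (Or.inl hwy)⟩
    · rintro ⟨hw, hwy⟩
      refine ⟨hw, ?_⟩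
      rintro (rfl | ⟨rfl, rfl⟩)
      exacts [hwy rfl, G.irrefl hw]
  rw [deg_eq_ncard, deg_eq_ncard, hnbr, Set.ncard_sdiff_singleton_of_mem ((G.mem_neighborSet x y).mpr h)]

lemma deg_deleteEdges_right (h : G.Adj x y) :
    deg (G.deleteEdges {s(x, y)}) y = deg G y - 1 := by
  rw [Sym2.eq_swap]
  exact deg_deleteEdges_left h.symm

lemma minDeg_deleteEdges_of_lt (h : G.Adj x y) (hx : minDeg G < deg G x)
    (hy : minDeg G < deg G y) : minDeg (G.deleteEdges {s(x, y)}) = minDeg G := by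
  have : Nonempty V := ⟨x⟩
  apply le_antisymm
  · obtain ⟨v, hv⟩ := exists_deg_eq_minDeg G
    have hvx : v ≠ x := by rintro rfl; omega
    have hvy : v ≠ y := by rintro rfl; omega
    calc minDeg (G.deleteEdges {s(x, y)}) ≤ deg (G.deleteEdges {s(x, y)}) v := minDeg_le_deg _ v
      _ = minDeg G := by rw [deg_deleteEdges_of_ne hvx hvy, hv]
  · refine le_minDeg _ fun v => ?_
    by_cases hvx : v = x
    · subst hvx; rw [deg_deleteEdges_left h]; omega
    by_cases hvy : v = y
    · subst hvy; rw [deg_deleteEdges_right h]; omega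
    rw [deg_deleteEdges_of_ne hvx hvy]
    exact minDeg_le_deg G v

end Degrees

section HighEdgeDeletion

variable {V : Type*} [Fintype V]

def HighEdgeDeletion (r : ℕ) (G H : SimpleGraph V) : Prop :=
  ∃ x y : V, G.Adj x y ∧ r < deg G x ∧ r < deg G y ∧ H = G.deleteEdges {s(x, y)}

variable {r : ℕ} {G H : SimpleGraph V}

lemma HighEdgeDeletion.lt (h : HighEdgeDeletion r G H) : H < G := by
  obtain ⟨x, y, hxy, -, -, rfl⟩ := h
  refine (G.deleteEdges_le _).lt_of_ne fun heq => ?_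
  have hadj := heq ▸ hxy
  simp [deleteEdges_adj] at hadj

lemma HighEdgeDeletion.minDeg_eq (h : HighEdgeDeletion (minDeg G) G H) : minDeg H = minDeg G := by
  obtain ⟨x, y, hxy, hx, hy, rfl⟩ := h
  exact minDeg_deleteEdges_of_lt hxy hx hy

lemma minDeg_eq_of_reflTransGen_highEdgeDeletion
    (h : Relation.ReflTransGen (HighEdgeDeletion r) G H) (hG : minDeg G = r) : minDeg H = r := by
  induction h with
  | refl => exact hG
  | tail _ hstep ih =>
    subst hG
    rw [← ih] at hstep
    exact hstep.minDeg_eq.trans ih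

lemma exists_reflTransGen_highEdgeDeletion_independent (r : ℕ) (G : SimpleGraph V) :
    ∃ H, Relation.ReflTransGen (HighEdgeDeletion r) G H ∧
      ∀ x y : V, r < deg H x → r < deg H y → ¬ H.Adj x y := by
  have hwf : WellFounded (flip (HighEdgeDeletion (V := V) r)) :=
    wellFounded_lt.mono fun _ _ h => h.lt
  obtain ⟨H, hGH, hmin⟩ := hwf.has_min {H | Relation.ReflTransGen (HighEdgeDeletion r) G H}
    ⟨G, .refl⟩
  refine ⟨H, hGH, fun x y hx hy hxy => ?_⟩
  have hstep : HighEdgeDeletion r H (H.deleteEdges {s(x, y)}) := ⟨x, y, hxy, hx, hy, rfl⟩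
  exact hmin _ (hGH.tail hstep) hstep

end HighEdgeDeletion

theorem stmt10_general {V : Type*} [Fintype V] (G₀ : SimpleGraph V)
    (r : ℕ) (hr : minDeg G₀ = r) :
    ∃ (G : SimpleGraph V) (m : ℕ) (A : ℕ → SimpleGraph V),
      A 0 = G₀ ∧ A m = G ∧
      (∀ i < m, ∃ x y : V, (A i).Adj x y ∧
        r < deg (A i) x ∧ r < deg (A i) y ∧
        A (i + 1) = (A i).deleteEdges {s(x, y)}) ∧
      minDeg G = r ∧
      (∀ x y : V, r < deg G x → r < deg G y → ¬ G.Adj x y) := by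
  obtain ⟨G, hG₀G, hindep⟩ := exists_reflTransGen_highEdgeDeletion_independent r G₀
  obtain ⟨m, A, hA0, hAm, hstep⟩ := hG₀G.exists_seq
  exact ⟨G, m, A, hA0, hAm, hstep, minDeg_eq_of_reflTransGen_highEdgeDeletion hG₀G hr, hindep⟩

/-- Starting from a graph G₀ of minimum degree r, one can repeatedly delete edges both of
whose endpoints currently have degree greater than r, reaching a spanning subgraph G with
minimum degree r in which the vertices of degree greater than r form an independent set. -/
theorem stmt10 {V : Type*} [Fintype V] [Nonempty V] (G₀ : SimpleGraph V)
    (r : ℕ) (hr : minDeg G₀ = r) :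
    ∃ (G : SimpleGraph V) (m : ℕ) (A : ℕ → SimpleGraph V),
      A 0 = G₀ ∧ A m = G ∧
      (∀ i < m, ∃ x y : V, (A i).Adj x y ∧
        r < deg (A i) x ∧ r < deg (A i) y ∧
        A (i + 1) = (A i).deleteEdges {s(x, y)}) ∧
      minDeg G = r ∧
      (∀ x y : V, r < deg G x → r < deg G y → ¬ G.Adj x y) :=
  stmt10_general G₀ r hr
end

section
/- There exists a constant C > 0 such that for every nonzero polynomial p with integer coefficients of degree k ≥ 2 and every pair of distinct complex roots u ≠ v of p, one has −log|u − v| ≤ C·k³·(a(p) + log k), where a(p) denotes the natural logarithm of the maximum of the absolute values of the coefficients of p. -/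
/-!
Let `c` be the leading coefficient of `p` and `S` its set of distinct complex roots. The product
`N` of `c * x - c * y` over the ordered pairs of distinct `x, y ∈ S` is fixed by every
automorphism of `ℚ̄ / ℚ`, and every `c * x` is an algebraic integer, so `N` is a nonzero integer
and `1 ≤ ‖N‖`. By Cauchy's bound each root has modulus less than `H + 1`, where `H` is the
largest absolute value of a coefficient, so each factor of `N` is at most `4 H ^ 2`, while the two
factors for `(u, v)` and `(v, u)` are at most `H ‖u - v‖`. Hence
`1 ≤ (H ‖u - v‖) ^ 2 * (4 H ^ 2) ^ (k ^ 2)`, and taking logarithms gives the claim with `C = 1`.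
-/

open Polynomial Real

theorem Finset.prod_offDiag_image {α β M : Type*} [DecidableEq α] [DecidableEq β]
    [CommMonoid M] {f : α → β} (hf : Function.Injective f) (s : Finset α) (g : β × β → M) :
    ∏ z ∈ (s.image f).offDiag, g z = ∏ z ∈ s.offDiag, g (f z.1, f z.2) := by
  have : (s.image f).offDiag = s.offDiag.image (Prod.map f f) := by
    ext ⟨a, b⟩
    simp only [mem_offDiag, mem_image, Prod.exists, Prod.map_apply, Prod.mk.injEq]
    constructor
    · rintro ⟨⟨x, hx, rfl⟩, ⟨y, hy, rfl⟩, hxy⟩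
      exact ⟨x, y, ⟨hx, hy, fun h => hxy (h ▸ rfl)⟩, rfl, rfl⟩
    · rintro ⟨x, y, ⟨hx, hy, hxy⟩, rfl, rfl⟩
      exact ⟨⟨x, hx, rfl⟩, ⟨y, hy, rfl⟩, hf.ne hxy⟩
  rw [this, prod_image fun x _ y _ h => (hf.prodMap hf) h]
  rfl

theorem exists_intCast_eq_of_isIntegral_of_forall_algEquiv_apply_eq {K : Type*} [Field K]
    [Algebra ℚ K] [IsGalois ℚ K] {x : K} (hx : IsIntegral ℤ x)
    (hfix : ∀ σ : K ≃ₐ[ℚ] K, σ x = x) : ∃ n : ℤ, (n : K) = x := by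
  obtain ⟨q, rfl⟩ := (InfiniteGalois.mem_range_algebraMap_iff_fixed x).mpr hfix
  obtain ⟨n, rfl⟩ := IsIntegrallyClosed.isIntegral_iff.mp
    ((isIntegral_algebraMap_iff (algebraMap ℚ K).injective).mp hx)
  exact ⟨n, by simp⟩

theorem neg_log_le_of_one_le_mul_pow {k : ℕ} (hk : 2 ≤ k) {H d : ℝ} (hH : 1 ≤ H) (hd : 0 < d)
    (h : 1 ≤ (H * d) ^ 2 * (4 * H ^ 2) ^ (k ^ 2)) : -log d ≤ k ^ 3 * (log H + log k) := by
  have hk' : (2 : ℝ) ≤ k := by exact_mod_cast hk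
  have hlogH : 0 ≤ log H := log_nonneg hH
  have hlog2 : log 2 ≤ log k := log_le_log two_pos hk'
  have hlog := log_le_log one_pos h
  rw [log_one, log_mul (by positivity) (by positivity), log_pow, log_pow,
    log_mul (by positivity) hd.ne', log_mul four_ne_zero (by positivity), log_pow,
    show (4 : ℝ) = 2 ^ 2 by norm_num, log_pow] at hlog
  push_cast at hlog
  have hk2 : (1 : ℝ) + k ^ 2 ≤ k ^ 3 := by nlinarith
  have hk3 : (k : ℝ) ^ 2 ≤ k ^ 3 := by nlinarith
  nlinarith [mul_le_mul_of_nonneg_right hk2 hlogH,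
    mul_le_mul_of_nonneg_left hlog2 (sq_nonneg (k : ℝ)),
    mul_le_mul_of_nonneg_right hk3 ((log_nonneg one_le_two).trans hlog2)]

namespace Polynomial

variable (p : ℤ[X])

open Classical in
noncomputable def rootDiffProd (F : Type*) [Field F] : F :=
  ∏ z ∈ (p.aroots F).toFinset.offDiag, ((p.leadingCoeff : F) * z.1 - p.leadingCoeff * z.2)

theorem aroots_toFinset_image_algEquiv {F : Type*} [Field F] [Algebra ℚ F] [DecidableEq F]
    (σ : F ≃ₐ[ℚ] F) : (p.aroots F).toFinset.image σ = (p.aroots F).toFinset := by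
  have hroot (x : F) : aeval (σ x) p = 0 ↔ aeval x p = 0 := by
    rw [show σ x = (σ.toAlgHom.restrictScalars ℤ) x from rfl, aeval_algHom_apply]
    simp
  ext y
  obtain ⟨x, rfl⟩ := σ.surjective y
  simp only [Finset.mem_image, Multiset.mem_toFinset, σ.injective.eq_iff, exists_eq_right]
  rw [mem_aroots', mem_aroots', hroot]

theorem algEquiv_rootDiffProd {F : Type*} [Field F] [Algebra ℚ F] (σ : F ≃ₐ[ℚ] F) :
    σ (p.rootDiffProd F) = p.rootDiffProd F := by
  classical
  conv_rhs => rw [rootDiffProd, ← p.aroots_toFinset_image_algEquiv σ,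
    Finset.prod_offDiag_image σ.injective]
  simp [rootDiffProd, map_prod]

theorem isIntegral_rootDiffProd (F : Type*) [Field F] : IsIntegral ℤ (p.rootDiffProd F) := by
  classical
  have hint {x : F} (hx : x ∈ (p.aroots F).toFinset) :
      IsIntegral ℤ ((p.leadingCoeff : F) * x) := by
    rw [← zsmul_eq_mul]
    exact isIntegral_leadingCoeff_smul p x (mem_aroots'.mp (Multiset.mem_toFinset.mp hx)).2
  refine IsIntegral.prod _ fun z hz => ?_
  obtain ⟨h1, h2, -⟩ := Finset.mem_offDiag.mp hz
  exact (hint h1).sub (hint h2)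

theorem rootDiffProd_map {K L : Type*} [Field K] [Field L] (φ : K →+* L)
    (hsplit : (p.map (algebraMap ℤ K)).Splits) : p.rootDiffProd L = φ (p.rootDiffProd K) := by
  classical
  have hroots : p.aroots L = (p.aroots K).map φ := by
    rw [aroots_def, ← hsplit.roots_map φ, map_map,
      RingHom.ext_int (φ.comp (algebraMap ℤ K)) (algebraMap ℤ L)]
  simp only [rootDiffProd, hroots, Multiset.toFinset_map, Finset.prod_offDiag_image φ.injective,
    map_prod, map_sub, map_mul, map_intCast]

theorem exists_intCast_eq_rootDiffProd (F : Type*) [Field F] [CharZero F] [IsAlgClosed F] :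
    ∃ n : ℤ, (n : F) = p.rootDiffProd F := by
  -- instance search does not see through the two `Algebra ℚ (AlgebraicClosure ℚ)` structures
  have : IsAlgClosure ℚ (AlgebraicClosure ℚ) := AlgebraicClosure.instIsAlgClosure ℚ
  obtain ⟨n, hn⟩ := exists_intCast_eq_of_isIntegral_of_forall_algEquiv_apply_eq
    (p.isIntegral_rootDiffProd (AlgebraicClosure ℚ)) p.algEquiv_rootDiffProd
  let φ : AlgebraicClosure ℚ →ₐ[ℚ] F := IsAlgClosed.lift
  refine ⟨n, ?_⟩
  rw [p.rootDiffProd_map φ.toRingHom (IsAlgClosed.splits _), ← hn]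
  simp

def height : ℕ := (Finset.range (p.natDegree + 1)).sup fun i => (p.coeff i).natAbs

theorem natAbs_coeff_le_height (i : ℕ) : (p.coeff i).natAbs ≤ p.height := by
  by_cases hi : i ≤ p.natDegree
  · exact Finset.le_sup (f := fun i => (p.coeff i).natAbs) (Finset.mem_range_succ_iff.mpr hi)
  · simp [coeff_eq_zero_of_natDegree_lt (not_le.mp hi)]

theorem norm_intCast_coeff_le_height (i : ℕ) : ‖(p.coeff i : ℂ)‖ ≤ p.height := by
  rw [Complex.norm_intCast, ← Int.cast_abs, Int.abs_eq_natAbs]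
  exact_mod_cast p.natAbs_coeff_le_height i

theorem norm_leadingCoeff_mul_sub_le (x y : ℂ) :
    ‖(p.leadingCoeff : ℂ) * x - p.leadingCoeff * y‖ ≤ p.height * ‖x - y‖ := by
  rw [← mul_sub, norm_mul]
  gcongr
  exact p.norm_intCast_coeff_le_height p.natDegree

variable {p}

theorem one_le_height (hp : p ≠ 0) : 1 ≤ p.height :=
  (Int.natAbs_pos.mpr (leadingCoeff_ne_zero.mpr hp)).trans_le (p.natAbs_coeff_le_height _)

theorem norm_lt_height_add_one (hp : p ≠ 0) {z : ℂ} (hz : aeval z p = 0) :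
    ‖z‖ < p.height + 1 := by
  set q := p.map (algebraMap ℤ ℂ)
  have hq : q ≠ 0 := (Polynomial.map_ne_zero_iff (RingHom.injective_int _)).mpr hp
  have hbound := IsRoot.norm_lt_cauchyBound hq (by rwa [IsRoot.def, eval_map, ← aeval_def])
  have hsup : (Finset.range q.natDegree).sup (‖q.coeff ·‖₊) ≤ p.height := by
    refine Finset.sup_le fun i _ => ?_
    rw [← NNReal.coe_le_coe]
    simpa [q, Int.norm_eq_abs] using p.norm_intCast_coeff_le_height i
  have hlc : 1 ≤ ‖q.leadingCoeff‖₊ := by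
    rw [← NNReal.coe_le_coe, leadingCoeff_map_of_injective (RingHom.injective_int _)]
    simp only [NNReal.coe_one, coe_nnnorm, algebraMap_int_eq, eq_intCast, Complex.norm_intCast]
    exact_mod_cast Int.one_le_abs (leadingCoeff_ne_zero.mpr hp)
  have : q.cauchyBound ≤ p.height + 1 :=
    add_le_add_left ((div_le_self zero_le hlc).trans hsup) 1
  exact_mod_cast hbound.trans_le this

theorem norm_leadingCoeff_mul_sub_le_of_aeval_eq_zero (hp : p ≠ 0) {x y : ℂ}
    (hx : aeval x p = 0) (hy : aeval y p = 0) :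
    ‖(p.leadingCoeff : ℂ) * x - p.leadingCoeff * y‖ ≤ 4 * (p.height : ℝ) ^ 2 := by
  have hH : (1 : ℝ) ≤ p.height := by exact_mod_cast one_le_height hp
  have hx' := norm_lt_height_add_one hp hx
  have hy' := norm_lt_height_add_one hp hy
  calc ‖(p.leadingCoeff : ℂ) * x - p.leadingCoeff * y‖
      ≤ p.height * ‖x - y‖ := p.norm_leadingCoeff_mul_sub_le x y
    _ ≤ p.height * (‖x‖ + ‖y‖) := by gcongr; exact norm_sub_le x y
    _ ≤ 4 * (p.height : ℝ) ^ 2 := by nlinarith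

theorem rootDiffProd_ne_zero {F : Type*} [Field F] [CharZero F] (hp : p ≠ 0) :
    p.rootDiffProd F ≠ 0 := by
  classical
  have hc : (p.leadingCoeff : F) ≠ 0 := by simpa using hp
  refine Finset.prod_ne_zero_iff.mpr fun z hz h => (Finset.mem_offDiag.mp hz).2.2 ?_
  exact mul_left_cancel₀ hc (sub_eq_zero.mp h)

theorem one_le_norm_rootDiffProd (hp : p ≠ 0) : 1 ≤ ‖p.rootDiffProd ℂ‖ := by
  obtain ⟨n, hn⟩ := p.exists_intCast_eq_rootDiffProd ℂ
  have hn0 : n ≠ 0 := by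
    rintro rfl
    exact rootDiffProd_ne_zero hp (by simpa using hn.symm)
  rw [← hn, Complex.norm_intCast]
  exact_mod_cast Int.one_le_abs hn0

theorem norm_rootDiffProd_le (hp : p ≠ 0) {u v : ℂ} (hu : aeval u p = 0) (hv : aeval v p = 0)
    (huv : u ≠ v) : ‖p.rootDiffProd ℂ‖ ≤
      (p.height * ‖u - v‖) ^ 2 * (4 * (p.height : ℝ) ^ 2) ^ (p.natDegree ^ 2) := by
  classical
  set S := (p.aroots ℂ).toFinset
  set c : ℂ := (p.leadingCoeff : ℂ)
  have hS {x : ℂ} : x ∈ S ↔ aeval x p = 0 := by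
    rw [Multiset.mem_toFinset, mem_aroots, and_iff_right hp]
  have huvS : (u, v) ∈ S.offDiag := Finset.mem_offDiag.mpr ⟨hS.mpr hu, hS.mpr hv, huv⟩
  have hvuS : (v, u) ∈ S.offDiag.erase (u, v) :=
    Finset.mem_erase.mpr ⟨by simp [huv], Finset.mem_offDiag.mpr ⟨hS.mpr hv, hS.mpr hu, huv.symm⟩⟩
  set T := (S.offDiag.erase (u, v)).erase (v, u)
  have hcardS : S.card ≤ p.natDegree :=
    (Multiset.toFinset_card_le _).trans ((card_roots' _).trans natDegree_map_le)
  have hcardT : T.card ≤ p.natDegree ^ 2 := calc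
    T.card ≤ S.offDiag.card := Finset.card_erase_le.trans Finset.card_erase_le
    _ ≤ S.card ^ 2 := by rw [Finset.offDiag_card, sq]; exact Nat.sub_le _ _
    _ ≤ p.natDegree ^ 2 := Nat.pow_le_pow_left hcardS 2
  have hrest : ∏ z ∈ T, ‖c * z.1 - c * z.2‖ ≤ (4 * (p.height : ℝ) ^ 2) ^ (p.natDegree ^ 2) :=
    calc _ ≤ (4 * (p.height : ℝ) ^ 2) ^ T.card := by
          rw [← Finset.prod_const]
          refine Finset.prod_le_prod (fun _ _ => norm_nonneg _) fun z hz => ?_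
          obtain ⟨h1, h2, -⟩ :=
            Finset.mem_offDiag.mp (Finset.mem_of_mem_erase (Finset.mem_of_mem_erase hz))
          exact norm_leadingCoeff_mul_sub_le_of_aeval_eq_zero hp (hS.mp h1) (hS.mp h2)
      _ ≤ _ := by
          have : (1 : ℝ) ≤ p.height := by exact_mod_cast one_le_height hp
          exact pow_le_pow_right₀ (by nlinarith) hcardT
  rw [rootDiffProd, norm_prod, ← Finset.mul_prod_erase _ _ huvS,
    ← Finset.mul_prod_erase _ _ hvuS, ← mul_assoc, norm_sub_rev (c * v), ← sq]
  gcongr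
  exact p.norm_leadingCoeff_mul_sub_le u v

end Polynomial

/-- Distinct complex roots of an integer polynomial of degree k ≥ 2 cannot be too close:
−log|u − v| ≤ C·k³·(a(p) + log k), where a(p) is the log of the largest absolute value of
a coefficient of p. -/
theorem stmt14 :
    ∃ C : ℝ, 0 < C ∧
      ∀ p : Polynomial ℤ, p ≠ 0 → 2 ≤ p.natDegree →
        ∀ u v : ℂ, Polynomial.aeval u p = 0 → Polynomial.aeval v p = 0 → u ≠ v →
          -Real.log (‖u - v‖) ≤
            C * (p.natDegree : ℝ) ^ 3 *
              (Real.log (((Finset.range (p.natDegree + 1)).sup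
                  (fun i => (p.coeff i).natAbs) : ℕ) : ℝ) +
                Real.log (p.natDegree : ℝ)) := by
  refine ⟨1, one_pos, fun p hp hk u v hu hv huv => ?_⟩
  rw [one_mul]
  exact neg_log_le_of_one_le_mul_pow hk (by exact_mod_cast one_le_height hp)
    (norm_pos_iff.mpr (sub_ne_zero.mpr huv))
    ((one_le_norm_rootDiffProd hp).trans (norm_rootDiffProd_le hp hu hv huv))
end

section
/- Let d ≥ 1 and let G be a finite simple graph of maximum degree d + 1 such that the distance between every pair of distinct vertices of degree d + 1 is at least three. Then ρ(G) ≤ ((d+1)(d²+1))^{1/3}. -/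
/-!
Every real eigenvalue `μ` of the adjacency matrix `A` satisfies `|μ|³ ≤ ‖A³‖∞`, the largest
row sum of `A³`; the row of `v` counts walks of length three from `v`, namely
`∑_{u ∼ v} ∑_{w ∼ u} deg w`. Two vertices of degree `d + 1` are never at distance `≤ 2`, so
each vertex has at most one neighbour of degree `d + 1` and `∑_{w ∼ u} deg w ≤ d · deg u + 1`.
If `deg v = d + 1`, all neighbours of `v` have degree `≤ d`, giving `(d + 1)(d² + 1)`;
otherwise `deg v ≤ d` gives `d (d (d + 1) + 1) < (d + 1)(d² + 1)`.
-/

open Finset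
open scoped Matrix

theorem Finset.sum_le_mul_card_add_one {ι : Type*} {s : Finset ι} {f : ι → ℕ} {a : ℕ}
    (hf : ∀ i ∈ s, f i ≤ a + 1)
    (hs : ∀ i ∈ s, ∀ j ∈ s, a < f i → a < f j → i = j) :
    ∑ i ∈ s, f i ≤ a * #s + 1 :=
  calc ∑ i ∈ s, f i ≤ ∑ i ∈ s, (a + if a < f i then 1 else 0) :=
        sum_le_sum fun i hi => by have := hf i hi; split_ifs <;> omega
    _ = a * #s + #{i ∈ s | a < f i} := by
        rw [sum_add_distrib, sum_const, smul_eq_mul, sum_boole, Nat.cast_id, mul_comm]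
    _ ≤ a * #s + 1 := by
        gcongr
        refine card_le_one.2 fun i hi j hj => ?_
        rw [mem_filter] at hi hj
        exact hs i hi.1 j hj.1 hi.2 hj.2

section LinftyOpNorm

attribute [local instance] Matrix.linftyOpNormedRing Matrix.linftyOpNormedAlgebra

theorem Matrix.abs_pow_le_of_mem_spectrum {n : Type*} [Fintype n] [DecidableEq n]
    {A : Matrix n n ℝ} {μ : ℝ} (hμ : μ ∈ spectrum ℝ A) (k : ℕ) {M : ℝ}
    (hM : ∀ i, ∑ j, |(A ^ k) i j| ≤ M) : |μ| ^ k ≤ M := by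
  have : Nonempty n := by
    by_contra h
    rw [not_nonempty_iff] at h
    simp [spectrum.of_subsingleton] at hμ
  calc |μ| ^ k = ‖μ ^ k‖ := by rw [norm_pow, Real.norm_eq_abs]
    _ ≤ ‖A ^ k‖ := spectrum.norm_le_norm_of_mem (spectrum.pow_mem_pow A k hμ)
    _ ≤ M := by
      obtain ⟨i, -, hi⟩ :=
        exists_mem_eq_sup univ univ_nonempty fun i => ∑ j, ‖(A ^ k) i j‖₊
      rw [Matrix.linfty_opNorm_def, hi]
      simpa using hM i

end LinftyOpNorm

namespace SimpleGraph

variable {V : Type*} [Fintype V] {G : SimpleGraph V} [DecidableRel G.Adj] {d : ℕ}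

theorem eq_of_dist_le_two_of_degree_eq
    (hsep : ∀ u v, u ≠ v → G.degree u = d + 1 → G.degree v = d + 1 → 3 ≤ G.dist u v)
    {a b : V} (ha : G.degree a = d + 1) (hb : G.degree b = d + 1) (hab : G.dist a b ≤ 2) :
    a = b := by
  by_contra hne
  have := hsep a b hne ha hb
  omega

theorem degree_le_of_adj_of_degree_eq (hdeg : ∀ v, G.degree v ≤ d + 1)
    (hsep : ∀ u v, u ≠ v → G.degree u = d + 1 → G.degree v = d + 1 → 3 ≤ G.dist u v)
    {a b : V} (hab : G.Adj a b) (ha : G.degree a = d + 1) : G.degree b ≤ d := by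
  by_contra! hb
  have hdist : G.dist a b = 1 := dist_eq_one_iff_adj.mpr hab
  exact hab.ne <| eq_of_dist_le_two_of_degree_eq hsep ha (by linarith [hdeg b]) (by omega)

theorem sum_degree_neighborFinset_le (hdeg : ∀ v, G.degree v ≤ d + 1)
    (hsep : ∀ u v, u ≠ v → G.degree u = d + 1 → G.degree v = d + 1 → 3 ≤ G.dist u v)
    (u : V) :
    ∑ w ∈ G.neighborFinset u, G.degree w ≤ d * G.degree u + 1 := by
  rw [← card_neighborFinset_eq_degree]
  refine sum_le_mul_card_add_one (fun w _ => hdeg w) fun w₁ h₁ w₂ h₂ hw₁ hw₂ => ?_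
  rw [mem_neighborFinset] at h₁ h₂
  have hwalk := dist_le ((Walk.nil.cons h₂).cons h₁.symm)
  exact eq_of_dist_le_two_of_degree_eq hsep (by linarith [hdeg w₁]) (by linarith [hdeg w₂])
    (by simpa using hwalk)

theorem sum_sum_degree_neighborFinset_le (hdeg : ∀ v, G.degree v ≤ d + 1)
    (hsep : ∀ u v, u ≠ v → G.degree u = d + 1 → G.degree v = d + 1 → 3 ≤ G.dist u v)
    (v : V) :
    ∑ u ∈ G.neighborFinset v, ∑ w ∈ G.neighborFinset u, G.degree w ≤
      (d + 1) * (d ^ 2 + 1) := by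
  refine (sum_le_sum fun u _ => sum_degree_neighborFinset_le hdeg hsep u).trans ?_
  rcases (hdeg v).lt_or_eq with hsmall | hbig
  · calc ∑ u ∈ G.neighborFinset v, (d * G.degree u + 1)
        ≤ ∑ u ∈ G.neighborFinset v, (d * (d + 1) + 1) := by gcongr with u; exact hdeg u
      _ = G.degree v * (d * (d + 1) + 1) := by
        rw [sum_const, card_neighborFinset_eq_degree, smul_eq_mul]
      _ ≤ d * (d * (d + 1) + 1) := by gcongr; omega
      _ ≤ (d + 1) * (d ^ 2 + 1) := by nlinarith
  · calc ∑ u ∈ G.neighborFinset v, (d * G.degree u + 1)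
        ≤ ∑ u ∈ G.neighborFinset v, (d * d + 1) := by
          gcongr with u hu
          exact degree_le_of_adj_of_degree_eq hdeg hsep ((mem_neighborFinset ..).1 hu) hbig
      _ = (d + 1) * (d ^ 2 + 1) := by
        rw [sum_const, card_neighborFinset_eq_degree, hbig, smul_eq_mul]
        ring

theorem sum_adjMatrix_pow_three_apply [DecidableEq V] (v : V) :
    ∑ j, (G.adjMatrix ℝ ^ 3) v j =
      ∑ u ∈ G.neighborFinset v, ∑ w ∈ G.neighborFinset u, (G.degree w : ℝ) := by
  have hrow : ∑ j, (G.adjMatrix ℝ ^ 3) v j =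
      (G.adjMatrix ℝ ^ 3 *ᵥ Function.const V 1) v := by
    simp [Matrix.mulVec, dotProduct]
  have hdeg : G.adjMatrix ℝ *ᵥ Function.const V 1 = fun w => (G.degree w : ℝ) :=
    funext fun w => by simp
  rw [hrow, pow_three, ← Matrix.mulVec_mulVec, ← Matrix.mulVec_mulVec, hdeg]
  simp only [adjMatrix_mulVec_apply]

theorem adjMatrix_pow_apply_nonneg [DecidableEq V] (k : ℕ) (u v : V) :
    0 ≤ (G.adjMatrix ℝ ^ k) u v := by
  rw [adjMatrix_pow_apply_eq_card_walk]
  positivity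

end SimpleGraph

theorem stmt15_general {V : Type*} [Fintype V] [DecidableEq V] (d : ℕ)
    (G : SimpleGraph V) (hΔ : maxDeg G = d + 1)
    (hdist : ∀ u v : V, u ≠ v → deg G u = d + 1 → deg G v = d + 1 → 3 ≤ G.dist u v) :
    specRad G ≤ (((d : ℝ) + 1) * ((d : ℝ) ^ 2 + 1)) ^ ((1 : ℝ) / 3) := by
  classical
  have hdeg : ∀ v, G.degree v ≤ d + 1 := fun v =>
    (hΔ : G.maxDegree = d + 1) ▸ G.degree_le_maxDegree v
  have hrow : ∀ v, ∑ j, |(G.adjMatrix ℝ ^ 3) v j| ≤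
      ((d : ℝ) + 1) * ((d : ℝ) ^ 2 + 1) := by
    intro v
    rw [sum_congr rfl fun j _ => abs_of_nonneg (G.adjMatrix_pow_apply_nonneg 3 v j),
      G.sum_adjMatrix_pow_three_apply]
    exact_mod_cast G.sum_sum_degree_neighborFinset_le hdeg hdist v
  refine Real.sSup_le (fun μ hμ => ?_) (by positivity)
  have hcube := Matrix.abs_pow_le_of_mem_spectrum hμ 3 hrow
  calc μ ≤ |μ| := le_abs_self μ
    _ ≤ _ := by
      rw [one_div, Real.le_rpow_inv_iff_of_pos (abs_nonneg μ) (by positivity) (by norm_num)]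
      exact_mod_cast hcube

/-- If G has maximum degree d+1 and every two distinct vertices of degree d+1 are at
distance at least three, then ρ(G) ≤ ((d+1)(d²+1))^(1/3). -/
theorem stmt15 {V : Type*} [Fintype V] [DecidableEq V] (d : ℕ) (hd : 1 ≤ d)
    (G : SimpleGraph V) (hΔ : maxDeg G = d + 1)
    (hdist : ∀ u v : V, u ≠ v → deg G u = d + 1 → deg G v = d + 1 → 3 ≤ G.dist u v) :
    specRad G ≤ (((d : ℝ) + 1) * ((d : ℝ) ^ 2 + 1)) ^ ((1 : ℝ) / 3) :=
  stmt15_general d G hΔ hdist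
end

section
/- Let H be a connected finite simple graph on n vertices whose maximum degree equals d and which is not d-regular. Then ρ(H) ≤ √((d − n⁻²)·Δ(H)). -/
open Finset Matrix

-- Cauchy–Schwarz for `a = t + (a - t)` with weights `1` and `m`.
theorem sq_le_succ_mul_sq_add {a t m P : ℝ} (hm : 0 ≤ m) (hP : 0 ≤ P)
    (h : (a - t) ^ 2 ≤ m * P) : a ^ 2 ≤ (m + 1) * (t ^ 2 + P) := by
  rcases hm.eq_or_lt with rfl | hm
  · nlinarith [sq_nonneg (a - t)]
  · nlinarith [sq_nonneg (m * t - (a - t))]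

theorem le_sqrt_mul_of_le_of_le {a t d : ℝ} (hat : a ≤ t) (htd : t ≤ d) : a ≤ √(t * d) := by
  rcases le_or_gt t 0 with ht | ht
  · exact (hat.trans ht).trans (Real.sqrt_nonneg _)
  · calc a ≤ √(t * t) := by rwa [Real.sqrt_mul_self ht.le]
      _ ≤ √(t * d) := Real.sqrt_le_sqrt (mul_le_mul_of_nonneg_left htd ht.le)

theorem Matrix.IsHermitian.sSup_spectrum_le {n : Type*} [Fintype n] [DecidableEq n] [Nonempty n]
    {A : Matrix n n ℝ} (hA : A.IsHermitian) {c : ℝ} (h : ∀ x, x ⬝ᵥ (A *ᵥ x) ≤ c * (x ⬝ᵥ x)) :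
    sSup (spectrum ℝ A) ≤ c := by
  refine csSup_le ⟨_, hA.eigenvalues_mem_spectrum_real (Classical.arbitrary n)⟩ fun μ hμ ↦ ?_
  rw [← spectrum_toLin', ← Module.End.hasEigenvalue_iff_mem_spectrum] at hμ
  obtain ⟨x, hx⟩ := hμ.exists_hasEigenvector
  have hAx : A *ᵥ x = μ • x := by simpa using hx.apply_eq_smul
  have hpos : 0 < x ⬝ᵥ x :=
    (sum_nonneg fun i _ ↦ mul_self_nonneg (x i)).lt_of_ne
      (Ne.symm (dotProduct_self_eq_zero.not.mpr hx.2))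
  have hμc := h x
  rw [hAx, dotProduct_smul, smul_eq_mul] at hμc
  exact le_of_mul_le_mul_right hμc hpos

namespace SimpleGraph

variable {V : Type*} {G : SimpleGraph V}

theorem sum_map_darts_le_sum_adj [Fintype V] [DecidableRel G.Adj] {M : Type*}
    [AddCommMonoid M] [PartialOrder M] [IsOrderedAddMonoid M]
    {l : List G.Dart} (hl : l.Nodup) {F : V → V → M} (hF : ∀ i j, 0 ≤ F i j) :
    (l.map fun d ↦ F d.fst d.snd).sum ≤ ∑ i, ∑ j, if G.Adj i j then F i j else 0 := by
  classical
  calc (l.map fun d ↦ F d.fst d.snd).sum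
      = ∑ q ∈ l.toFinset.image Dart.toProd, if G.Adj q.1 q.2 then F q.1 q.2 else 0 := by
        rw [sum_image fun _ _ _ _ h ↦ Dart.toProd_injective h, List.sum_toFinset _ hl]
        exact congrArg List.sum (List.map_congr_left fun d _ ↦ (if_pos d.adj).symm)
    _ ≤ ∑ q : V × V, if G.Adj q.1 q.2 then F q.1 q.2 else 0 :=
        sum_le_sum_of_subset_of_nonneg (subset_univ _) fun q _ _ ↦ by split_ifs <;> simp [hF]
    _ = ∑ i, ∑ j, if G.Adj i j then F i j else 0 := Fintype.sum_prod_type _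

namespace Walk

theorem sq_sub_le_length_mul_sum_darts (x : V → ℝ) {u v : V} (p : G.Walk u v) :
    (x u - x v) ^ 2 ≤ p.length * (p.darts.map fun d ↦ (x d.fst - x d.snd) ^ 2).sum := by
  induction p with
  | nil => simp
  | @cons u w v _ q ih =>
    have hq : 0 ≤ (q.darts.map fun d ↦ (x d.fst - x d.snd) ^ 2).sum :=
      List.sum_nonneg (by simp only [List.mem_map]; rintro _ ⟨d, -, rfl⟩; positivity)
    simpa [add_comm, add_mul] using
      sq_le_succ_mul_sq_add (a := x u - x v) (t := x u - x w) (by positivity) hq (by simpa using ih)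

theorem IsTrail.nodup_darts_append_reverse {u v : V} {p : G.Walk u v} (hp : p.IsTrail) :
    (p.darts ++ p.reverse.darts).Nodup := by
  have hedges : (p.darts.map Dart.edge).Nodup := hp.edges_nodup
  have hdarts : p.darts.Nodup := hedges.of_map
  refine hdarts.append ?_ ?_
  · rw [darts_reverse, List.nodup_reverse]
    exact hdarts.map Dart.symm_involutive.injective
  · intro d hd hd'
    rw [mem_darts_reverse] at hd'
    exact d.symm_ne (List.inj_on_of_nodup_map hedges hd' hd (Dart.edge_symm d))

theorem IsTrail.sum_darts_sq_sub_le_dotProduct_lapMatrix [Fintype V] [DecidableEq V]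
    [DecidableRel G.Adj] {R : Type*} [Field R] [LinearOrder R] [IsStrictOrderedRing R]
    (x : V → R) {u v : V} {p : G.Walk u v} (hp : p.IsTrail) :
    (p.darts.map fun d ↦ (x d.fst - x d.snd) ^ 2).sum ≤ x ⬝ᵥ (G.lapMatrix R *ᵥ x) := by
  have h := sum_map_darts_le_sum_adj hp.nodup_darts_append_reverse
    (F := fun i j ↦ (x i - x j) ^ 2) fun _ _ ↦ sq_nonneg _
  rw [List.map_append, List.sum_append, darts_reverse, List.map_reverse, List.sum_reverse,
    List.map_map] at h
  simp only [Function.comp_def, Dart.symm_toProd, Prod.fst_swap, Prod.snd_swap] at h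
  simp only [sub_sq_comm (x (Dart.toProd _).2)] at h
  rw [← toLinearMap₂'_apply', lapMatrix_toLinearMap₂']
  linarith

end Walk

theorem Connected.sq_sub_le_mul_dotProduct_lapMatrix [Fintype V] [DecidableEq V]
    [DecidableRel G.Adj] (hG : G.Connected) (x : V → ℝ) (u v : V) :
    (x u - x v) ^ 2 ≤ (Fintype.card V - 1 : ℝ) * (x ⬝ᵥ (G.lapMatrix ℝ *ᵥ x)) := by
  obtain ⟨p, hp⟩ := hG.preconnected.exists_isPath u v
  have hlen : (p.length : ℝ) ≤ Fintype.card V - 1 := by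
    rw [le_sub_iff_add_le]
    exact_mod_cast hp.length_lt
  calc (x u - x v) ^ 2
      ≤ p.length * (p.darts.map fun d ↦ (x d.fst - x d.snd) ^ 2).sum :=
        p.sq_sub_le_length_mul_sum_darts x
    _ ≤ p.length * (x ⬝ᵥ (G.lapMatrix ℝ *ᵥ x)) :=
        mul_le_mul_of_nonneg_left (hp.isTrail.sum_darts_sq_sub_le_dotProduct_lapMatrix x)
          p.length.cast_nonneg
    _ ≤ (Fintype.card V - 1 : ℝ) * (x ⬝ᵥ (G.lapMatrix ℝ *ᵥ x)) :=
        mul_le_mul_of_nonneg_right hlen ((posSemidef_lapMatrix ℝ G).dotProduct_mulVec_nonneg x)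

theorem Connected.dotProduct_mulVec_adjMatrix_le [Fintype V] [DecidableEq V]
    [DecidableRel G.Adj] (hG : G.Connected) {w : V} (hw : G.degree w < G.maxDegree)
    (x : V → ℝ) :
    x ⬝ᵥ (G.adjMatrix ℝ *ᵥ x) ≤ (G.maxDegree - ((Fintype.card V : ℝ) ^ 2)⁻¹) * (x ⬝ᵥ x) := by
  have : Nonempty V := hG.nonempty
  set n : ℝ := (Fintype.card V : ℝ)
  have hsplit : x ⬝ᵥ (G.adjMatrix ℝ *ᵥ x)
      = ∑ i, G.degree i * x i * x i - x ⬝ᵥ (G.lapMatrix ℝ *ᵥ x) := by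
    rw [lapMatrix, sub_mulVec, dotProduct_sub, dotProduct_mulVec_degMatrix]
    ring
  set E := x ⬝ᵥ (G.lapMatrix ℝ *ᵥ x)
  have hn : 0 < n := by positivity
  have hE : 0 ≤ E := (posSemidef_lapMatrix ℝ G).dotProduct_mulVec_nonneg x
  have hdeg : x w ^ 2 + ∑ i, G.degree i * x i * x i ≤ G.maxDegree * (x ⬝ᵥ x) := by
    have hw' : (G.degree w : ℝ) + 1 ≤ G.maxDegree := by exact_mod_cast hw
    have hdefect : x w ^ 2 ≤ ∑ i, (G.maxDegree - G.degree i : ℝ) * (x i * x i) :=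
      calc x w ^ 2 ≤ (G.maxDegree - G.degree w : ℝ) * (x w * x w) := by nlinarith [sq_nonneg (x w)]
        _ ≤ ∑ i, (G.maxDegree - G.degree i : ℝ) * (x i * x i) :=
          single_le_sum (f := fun i ↦ (G.maxDegree - G.degree i : ℝ) * (x i * x i))
            (fun i _ ↦ mul_nonneg (sub_nonneg.mpr (by exact_mod_cast G.degree_le_maxDegree i))
              (mul_self_nonneg _)) (mem_univ w)
    simp only [sub_mul, sum_sub_distrib, ← mul_sum] at hdefect
    simp only [dotProduct, mul_assoc]
    linarith
  obtain ⟨u, -, hu⟩ := exists_max_image univ (fun i ↦ x i ^ 2) univ_nonempty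
  have hnorm : x ⬝ᵥ x ≤ n * x u ^ 2 :=
    calc x ⬝ᵥ x = ∑ i, x i ^ 2 := by simp only [dotProduct, sq]
      _ ≤ ∑ _i : V, x u ^ 2 := sum_le_sum fun i hi ↦ hu i hi
      _ = n * x u ^ 2 := by rw [sum_const, card_univ, nsmul_eq_mul]
  have hu' : x u ^ 2 ≤ n * (x w ^ 2 + E) := by
    simpa using sq_le_succ_mul_sq_add (sub_nonneg.mpr (Nat.one_le_cast.mpr Fintype.card_pos)) hE
      (hG.sq_sub_le_mul_dotProduct_lapMatrix x u w)
  have hgap : (n ^ 2)⁻¹ * (x ⬝ᵥ x) ≤ x w ^ 2 + E := by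
    rw [inv_mul_le_iff₀ (by positivity)]
    nlinarith
  linarith

end SimpleGraph

/-- A connected graph on n vertices with maximum degree d that is not d-regular satisfies
ρ(H) ≤ √((d − n⁻²)·Δ(H)). -/
theorem stmt17 {V : Type*} [Fintype V] [DecidableEq V] (H : SimpleGraph V)
    (hconn : H.Connected) (n d : ℕ) (hn : Fintype.card V = n) (hd : maxDeg H = d)
    (hreg : ¬ ∀ v : V, deg H v = d) :
    specRad H ≤ Real.sqrt (((d : ℝ) - ((n : ℝ) ^ 2)⁻¹) * (maxDeg H : ℝ)) := by
  classical
  have : Nonempty V := hconn.nonempty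
  obtain ⟨w, hw⟩ := not_forall.mp hreg
  have hmax : maxDeg H = H.maxDegree := rfl
  have hw' : H.degree w < H.maxDegree :=
    (H.degree_le_maxDegree w).lt_of_ne (by rw [← hmax, hd]; exact hw)
  have hρ : specRad H ≤ d - ((n : ℝ) ^ 2)⁻¹ := by
    subst hn hd
    exact (H.isHermitian_adjMatrix ℝ).sSup_spectrum_le (hconn.dotProduct_mulVec_adjMatrix_le hw')
  rw [hd]
  exact le_sqrt_mul_of_le_of_le hρ (sub_le_self _ (by positivity))
end
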